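/- Let N ≥ 3, 1 < p < 2N/(N + 2) and T ∈ ℝ. There exists a constant κ > 0, depending only on N and p, such that the function v(x, t) := κ·(T − t)^{1/(2−p)}·‖x‖^{p/(p−2)} satisfies the parabolic p-Laplace equation ∂_t v(x, t) = div_x(‖∇_x v(x,t)‖^{p−2}·∇_x v(x,t)) pointwise at every (x, t) ∈ ℝ^N × ℝ with x ≠ 0 and t < T. -/

import Mathlib

/-- The divergence of a vector field `F : ℝ^N → ℝ^N` at `x`: the trace of its Jacobian. -/
noncomputable def divergence {N : ℕ}
    (F : EuclideanSpace ℝ (Fin N) → EuclideanSpace ℝ (Fin N))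
    (x : EuclideanSpace ℝ (Fin N)) : ℝ :=
  ∑ i, fderiv ℝ F x (EuclideanSpace.single i 1) i

/-- The `p`-Laplacian flux `‖∇f‖^{p-2} ∇f` of a scalar function `f : ℝ^N → ℝ`. -/
noncomputable def pFlux {N : ℕ} (p : ℝ) (f : EuclideanSpace ℝ (Fin N) → ℝ)
    (y : EuclideanSpace ℝ (Fin N)) : EuclideanSpace ℝ (Fin N) :=
  ‖gradient f y‖ ^ (p - 2) • gradient f y

/-!
The flux `‖∇u‖^{p-2} ∇u` of `u = c ‖x‖^α` is `|cα|^{p-2} cα ‖x‖^β x` with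
`β = (α - 1)(p - 1) - 1`, and `div (‖x‖^β x) = (N + β) ‖x‖^β`. The exponent `α = p/(p-2) = -m`
is the fixed point `β = α`, so the equation separates: the amplitude `a(t)` of
`v = a(t) ‖x‖^α` must solve `a' = -(m a)^{p-1} (N - m)`, and `a = κ (T - t)^{1/(2-p)}` does so
exactly when `κ^{2-p} = (2 - p) m^{p-1} (N - m)`. The bound on `p` gives `0 < m < N`, so this
`κ` is positive.
-/

open InnerProductSpace Topology

section NormRpow

variable {E : Type*} [NormedAddCommGroup E] [InnerProductSpace ℝ E] {x : E}

theorem hasFDerivAt_norm_rpow_of_ne_zero (hx : x ≠ 0) (q : ℝ) :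
    HasFDerivAt (fun z : E => ‖z‖ ^ q) ((q * ‖x‖ ^ (q - 2)) • innerSL ℝ x) x := by
  have h := (hasStrictFDerivAt_norm_sq x).hasFDerivAt.rpow_const (p := q / 2) (by simp [hx])
  simp_rw [← Real.rpow_natCast_mul (norm_nonneg _), ← Nat.cast_smul_eq_nsmul ℝ, smul_smul] at h
  convert h using 2 <;> ring_nf

theorem hasGradientAt_const_mul_norm_rpow [CompleteSpace E] (hx : x ≠ 0) (c q : ℝ) :
    HasGradientAt (fun z : E => c * ‖z‖ ^ q) ((c * q * ‖x‖ ^ (q - 2)) • x) x := by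
  have h := (hasFDerivAt_norm_rpow_of_ne_zero hx q).const_mul c
  rwa [hasGradientAt_iff_hasFDerivAt, show toDual ℝ E ((c * q * ‖x‖ ^ (q - 2)) • x)
    = c • (q * ‖x‖ ^ (q - 2)) • innerSL ℝ x by ext; simp [mul_assoc]]

theorem hasFDerivAt_norm_rpow_smul (hx : x ≠ 0) (β : ℝ) :
    HasFDerivAt (fun y : E => ‖y‖ ^ β • y)
      (‖x‖ ^ β • ContinuousLinearMap.id ℝ E + ((β * ‖x‖ ^ (β - 2)) • innerSL ℝ x).smulRight x) x :=
  (hasFDerivAt_norm_rpow_of_ne_zero hx β).smul (hasFDerivAt_id x)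

end NormRpow

section Divergence

variable {N : ℕ} {F G : EuclideanSpace ℝ (Fin N) → EuclideanSpace ℝ (Fin N)}
  {x : EuclideanSpace ℝ (Fin N)}

theorem Filter.EventuallyEq.divergence_eq (h : F =ᶠ[𝓝 x] G) : divergence F x = divergence G x := by
  rw [divergence, divergence, h.fderiv_eq]

theorem divergence_const_smul (c : ℝ) (F : EuclideanSpace ℝ (Fin N) → EuclideanSpace ℝ (Fin N)) :
    divergence (c • F) x = c * divergence F x := by
  simp [divergence, fderiv_const_smul_field, Finset.mul_sum]

theorem divergence_norm_rpow_smul (hx : x ≠ 0) (β : ℝ) :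
    divergence (fun y : EuclideanSpace ℝ (Fin N) => ‖y‖ ^ β • y) x = (N + β) * ‖x‖ ^ β := by
  have hsq : ∑ i, x i * x i = ‖x‖ ^ 2 := by
    simp only [EuclideanSpace.real_norm_sq_eq x, sq]
  simp only [divergence, (hasFDerivAt_norm_rpow_smul hx β).fderiv, add_apply, smul_apply,
    ContinuousLinearMap.id_apply, ContinuousLinearMap.smulRight_apply, coe_innerSL_apply,
    EuclideanSpace.inner_single_right, Real.ringHom_apply, one_mul, smul_eq_mul, PiLp.add_apply,
    PiLp.smul_apply, PiLp.single_eq_same, mul_one, Finset.sum_add_distrib, Finset.sum_const,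
    Finset.card_univ, Fintype.card_fin, nsmul_eq_mul]
  simp_rw [mul_assoc, ← Finset.mul_sum, hsq, ← mul_assoc]
  rw [← Real.rpow_natCast, mul_assoc β, ← Real.rpow_add (norm_pos_iff.2 hx)]
  norm_num
  ring

end Divergence

section PLaplacian

variable {N : ℕ} {x : EuclideanSpace ℝ (Fin N)}

theorem pFlux_const_mul_norm_rpow (p c α : ℝ) (hx : x ≠ 0) :
    pFlux p (fun z : EuclideanSpace ℝ (Fin N) => c * ‖z‖ ^ α) x
      = (|c * α| ^ (p - 2) * (c * α)) • ‖x‖ ^ ((α - 1) * (p - 1) - 1) • x := by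
  have hx' : 0 < ‖x‖ := norm_pos_iff.2 hx
  have hnorm : ‖(c * α * ‖x‖ ^ (α - 2)) • x‖ = |c * α| * ‖x‖ ^ (α - 1) := by
    rw [norm_smul, Real.norm_eq_abs, abs_mul, abs_of_pos (by positivity : 0 < ‖x‖ ^ (α - 2)),
      mul_assoc, ← Real.rpow_add_one hx'.ne']
    ring_nf
  rw [pFlux, (hasGradientAt_const_mul_norm_rpow hx c α).gradient, hnorm, smul_smul, smul_smul,
    Real.mul_rpow (abs_nonneg _) (by positivity), ← Real.rpow_mul hx'.le]
  congr 1
  have hexp : (α - 1) * (p - 2) + (α - 2) = (α - 1) * (p - 1) - 1 := by ring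
  rw [← hexp, Real.rpow_add hx']
  ring

theorem divergence_pFlux_const_mul_norm_rpow (p c α : ℝ) (hx : x ≠ 0) :
    divergence (pFlux p (fun z : EuclideanSpace ℝ (Fin N) => c * ‖z‖ ^ α)) x
      = |c * α| ^ (p - 2) * (c * α) *
          ((N + ((α - 1) * (p - 1) - 1)) * ‖x‖ ^ ((α - 1) * (p - 1) - 1)) := by
  have hflux : pFlux p (fun z : EuclideanSpace ℝ (Fin N) => c * ‖z‖ ^ α) =ᶠ[𝓝 x]
      (|c * α| ^ (p - 2) * (c * α)) • fun y => ‖y‖ ^ ((α - 1) * (p - 1) - 1) • y := by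
    filter_upwards [eventually_ne_nhds hx] with y hy
    exact pFlux_const_mul_norm_rpow p c α hy
  rw [hflux.divergence_eq, divergence_const_smul, divergence_norm_rpow_smul hx]

theorem divergence_pFlux_singular_profile {p c : ℝ} (hp0 : 0 < p) (hp2 : p < 2) (hc : 0 < c)
    (hx : x ≠ 0) :
    divergence (pFlux p (fun z : EuclideanSpace ℝ (Fin N) => c * ‖z‖ ^ (p / (p - 2)))) x
      = -((c * (p / (2 - p))) ^ (p - 1) * (N - p / (2 - p)) * ‖x‖ ^ (p / (p - 2))) := by
  have hα : p / (p - 2) = -(p / (2 - p)) := by rw [← div_neg, neg_sub]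
  have hfix : (p / (p - 2) - 1) * (p - 1) - 1 = p / (p - 2) := by
    field_simp [(by linarith : p - 2 ≠ 0)]
    ring
  have hcm : 0 < c * (p / (2 - p)) := by have := sub_pos.2 hp2; positivity
  rw [divergence_pFlux_const_mul_norm_rpow p c _ hx, hfix, hα, mul_neg, abs_neg, abs_of_pos hcm, show p - 1 = (p - 2) + 1 by ring,
    Real.rpow_add_one hcm.ne']
  ring

end PLaplacian

theorem hasDerivAt_const_mul_sub_rpow (κ γ : ℝ) {T t : ℝ} (ht : t < T) :
    HasDerivAt (fun s => κ * (T - s) ^ γ) (-(κ * γ * (T - t) ^ (γ - 1))) t := by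
  refine ((((hasDerivAt_id' t).const_sub T).rpow_const (p := γ)
    (Or.inl (sub_pos.2 ht).ne')).const_mul κ).congr_deriv ?_
  ring

noncomputable def unboundedSolutionConst (N : ℕ) (p : ℝ) : ℝ :=
  ((2 - p) * (p / (2 - p)) ^ (p - 1) * (N - p / (2 - p))) ^ (1 / (2 - p))

section UnboundedSolutionConst

variable {N : ℕ} {p : ℝ}

theorem unboundedSolutionConst_base_pos (hp0 : 0 < p) (hp2 : p < 2) (hpN : p / (2 - p) < N) :
    0 < (2 - p) * (p / (2 - p)) ^ (p - 1) * (N - p / (2 - p)) := by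
  have := sub_pos.2 hp2
  have := sub_pos.2 hpN
  positivity

theorem unboundedSolutionConst_pos (hp0 : 0 < p) (hp2 : p < 2) (hpN : p / (2 - p) < N) :
    0 < unboundedSolutionConst N p :=
  Real.rpow_pos_of_pos (unboundedSolutionConst_base_pos hp0 hp2 hpN) _

theorem unboundedSolutionConst_balance (hp0 : 0 < p) (hp2 : p < 2) (hpN : p / (2 - p) < N)
    {τ : ℝ} (hτ : 0 < τ) :
    unboundedSolutionConst N p * (1 / (2 - p)) * τ ^ (1 / (2 - p) - 1)
      = (unboundedSolutionConst N p * τ ^ (1 / (2 - p)) * (p / (2 - p))) ^ (p - 1)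
          * (N - p / (2 - p)) := by
  set κ := unboundedSolutionConst N p
  have h2p : 0 < 2 - p := sub_pos.2 hp2
  have hκ : 0 < κ := unboundedSolutionConst_pos hp0 hp2 hpN
  have hκpow : κ ^ (2 - p) = (2 - p) * (p / (2 - p)) ^ (p - 1) * (N - p / (2 - p)) := by
    simp only [κ, unboundedSolutionConst, one_div]
    exact Real.rpow_inv_rpow (unboundedSolutionConst_base_pos hp0 hp2 hpN).le h2p.ne'
  have hγ : 1 / (2 - p) * (p - 1) = 1 / (2 - p) - 1 := by field_simp; ring
  have hm : 0 < p / (2 - p) := div_pos hp0 h2p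
  calc κ * (1 / (2 - p)) * τ ^ (1 / (2 - p) - 1)
      = κ ^ (p - 1) * κ ^ (2 - p) * (1 / (2 - p)) * τ ^ (1 / (2 - p) - 1) := by
        rw [← Real.rpow_add hκ]; norm_num
    _ = _ := by
        rw [hκpow, Real.mul_rpow (by positivity) hm.le, Real.mul_rpow hκ.le (by positivity),
          ← Real.rpow_mul hτ.le, hγ]
        field_simp

end UnboundedSolutionConst

theorem unbounded_solution_subcritical_general (N : ℕ) (p : ℝ)
    (hp₁ : 1 < p) (hp₂ : p < 2 * (N : ℝ) / ((N : ℝ) + 2)) :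
    ∃ κ : ℝ, 0 < κ ∧
      ∀ T : ℝ, ∀ (x : EuclideanSpace ℝ (Fin N)) (t : ℝ), x ≠ 0 → t < T →
        deriv (fun s : ℝ => κ * (T - s) ^ ((1 : ℝ) / (2 - p)) * ‖x‖ ^ (p / (p - 2))) t =
          divergence
            (pFlux p (fun z : EuclideanSpace ℝ (Fin N) =>
              κ * (T - t) ^ ((1 : ℝ) / (2 - p)) * ‖z‖ ^ (p / (p - 2)))) x := by
  have hp0 : 0 < p := by linarith
  have hpN₂ : p * (N + 2) < 2 * N := (lt_div_iff₀ (by positivity)).1 hp₂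
  have hp2 : p < 2 := by nlinarith
  have hpN : p / (2 - p) < N := by rw [div_lt_iff₀ (by linarith)]; nlinarith
  have hκ := unboundedSolutionConst_pos hp0 hp2 hpN
  refine ⟨unboundedSolutionConst N p, hκ, fun T x t hx ht => ?_⟩
  have hτ : 0 < T - t := sub_pos.2 ht
  rw [((hasDerivAt_const_mul_sub_rpow _ _ ht).mul_const _).deriv,
    divergence_pFlux_singular_profile hp0 hp2 (by positivity) hx,
    ← unboundedSolutionConst_balance hp0 hp2 hpN hτ]
  ring

/-- For `N ≥ 3` and `1 < p < 2N/(N+2)` there is `κ > 0` depending only on `N` and `p`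
such that `v(x,t) = κ (T-t)^{1/(2-p)} ‖x‖^{p/(p-2)}` solves the parabolic `p`-Laplace
equation pointwise for `x ≠ 0` and `t < T` (an unbounded solution in the subcritical
singular range). -/
theorem unbounded_solution_subcritical (N : ℕ) (hN : 3 ≤ N) (p : ℝ)
    (hp₁ : 1 < p) (hp₂ : p < 2 * (N : ℝ) / ((N : ℝ) + 2)) :
    ∃ κ : ℝ, 0 < κ ∧
      ∀ T : ℝ, ∀ (x : EuclideanSpace ℝ (Fin N)) (t : ℝ), x ≠ 0 → t < T →
        deriv (fun s : ℝ => κ * (T - s) ^ ((1 : ℝ) / (2 - p)) * ‖x‖ ^ (p / (p - 2))) t =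
          divergence
            (pFlux p (fun z : EuclideanSpace ℝ (Fin N) =>
              κ * (T - t) ^ ((1 : ℝ) / (2 - p)) * ‖z‖ ^ (p / (p - 2)))) x :=
  unbounded_solution_subcritical_general N p hp₁ hp₂
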